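/- arXiv:1407.3123 — 7 statements merged into one kernel-verified Lean document; each statement's English description precedes it below -/
import Mathlib

section
/- There exists a standard budget game that admits no pure Nash equilibrium. -/
noncomputable section

open Finset

/-- A (standard) budget game: finitely many players `ι`, resources `ρ` and tasks `τ`.
Each resource has a positive budget, each task a nonnegative demand on every resource,
each task belongs to a unique player (`owner`), and each player has a nonempty finite
family of strategies, each strategy being a set of her own tasks. -/
structure BudgetGame (ι ρ τ : Type*) [Fintype ι] [Fintype ρ] [Fintype τ]
    [DecidableEq ι] [DecidableEq τ] where
  budget : ρ → ℝ
  budget_pos : ∀ r, 0 < budget r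
  demand : τ → ρ → ℝ
  demand_nonneg : ∀ t r, 0 ≤ demand t r
  owner : τ → ι
  strat : ι → Finset (Finset τ)
  strat_nonempty : ∀ i, (strat i).Nonempty
  strat_owned : ∀ i, ∀ A ∈ strat i, ∀ t ∈ A, owner t = i

namespace BudgetGame

variable {ι ρ τ : Type*} [Fintype ι] [Fintype ρ] [Fintype τ]
  [DecidableEq ι] [DecidableEq τ]

/-- `s` is a strategy profile: player `i` plays a strategy from her strategy set. -/
def Valid (G : BudgetGame ι ρ τ) (s : ι → Finset τ) : Prop :=
  ∀ i, s i ∈ G.strat i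

/-- Total demand `D_r(s)` of the chosen tasks on resource `r`. -/
def totalDemand (G : BudgetGame ι ρ τ) (s : ι → Finset τ) (r : ρ) : ℝ :=
  ∑ i, ∑ t ∈ s i, G.demand t r

/-- Standard (proportional) utility `u_{t,r}(s) = min(t(r), b_r·t(r)/D_r(s))`
of a chosen task `t` from resource `r`. -/
def stdTaskUtil (G : BudgetGame ι ρ τ) (s : ι → Finset τ) (t : τ) (r : ρ) : ℝ :=
  min (G.demand t r) (G.budget r * G.demand t r / G.totalDemand s r)

/-- Utility of player `i` in the standard budget game. -/
def stdUtil (G : BudgetGame ι ρ τ) (s : ι → Finset τ) (i : ι) : ℝ :=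
  ∑ t ∈ s i, ∑ r, G.stdTaskUtil s t r

/-- Social welfare in the standard budget game. -/
def stdWelfare (G : BudgetGame ι ρ τ) (s : ι → Finset τ) : ℝ :=
  ∑ i, G.stdUtil s i

/-- Pure Nash equilibrium of the standard budget game. -/
def stdNE (G : BudgetGame ι ρ τ) (s : ι → Finset τ) : Prop :=
  G.Valid s ∧ ∀ i, ∀ a ∈ G.strat i,
    G.stdUtil (Function.update s i a) i ≤ G.stdUtil s i

/-- An ordering vector `≺ = (≺_r)_r` is encoded by injective rank functions:
`t' ≺_r t` iff `ord r t' < ord r t`. -/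
def InjOrd (ord : ρ → τ → ℕ) : Prop :=
  ∀ r, Function.Injective (ord r)

/-- Total demand on `r` of the chosen tasks that come strictly before `t` in `≺_r`. -/
def prefixDemand (G : BudgetGame ι ρ τ) (s : ι → Finset τ) (ord : ρ → τ → ℕ)
    (t : τ) (r : ρ) : ℝ :=
  ∑ i, ∑ t' ∈ (s i).filter (fun t' => ord r t' < ord r t), G.demand t' r

/-- Ordered utility `u_{t,r}(s,≺) = min(t(r), max(0, b_r − Σ_{t' ≺_r t chosen} t'(r)))`. -/
def ordTaskUtil (G : BudgetGame ι ρ τ) (s : ι → Finset τ) (ord : ρ → τ → ℕ)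
    (t : τ) (r : ρ) : ℝ :=
  min (G.demand t r) (max 0 (G.budget r - G.prefixDemand s ord t r))

/-- Utility of player `i` in the ordered budget game. -/
def ordUtil (G : BudgetGame ι ρ τ) (s : ι → Finset τ) (ord : ρ → τ → ℕ) (i : ι) : ℝ :=
  ∑ t ∈ s i, ∑ r, G.ordTaskUtil s ord t r

/-- Social welfare in the ordered budget game. -/
def ordWelfare (G : BudgetGame ι ρ τ) (s : ι → Finset τ) (ord : ρ → τ → ℕ) : ℝ :=
  ∑ i, G.ordUtil s ord i

/-- `ord'` arises from `ord` by appending the tasks of `newT` at the end of every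
resource order: it is injective per resource, keeps the relative order of all tasks
not in `newT`, and places every task of `newT` after all of them. -/
def IsReorder (ord ord' : ρ → τ → ℕ) (newT : Finset τ) : Prop :=
  InjOrd ord' ∧
  (∀ (r : ρ), ∀ x ∉ newT, ∀ y ∉ newT, (ord' r x < ord' r y ↔ ord r x < ord r y)) ∧
  (∀ (r : ρ), ∀ x ∉ newT, ∀ t ∈ newT, ord' r x < ord' r t)

/-- The tasks newly chosen when coalition `C` deviates from `s` to `s'`. -/
def newTasks (C : Finset ι) (s s' : ι → Finset τ) : Finset τ :=
  C.biUnion fun i => s' i \ s i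

/-- Pure Nash equilibrium of the ordered budget game: no unilateral deviation
(with the deviator's new tasks appended at the end of every resource order)
strictly increases the deviator's utility. -/
def ordNE (G : BudgetGame ι ρ τ) (s : ι → Finset τ) (ord : ρ → τ → ℕ) : Prop :=
  G.Valid s ∧ InjOrd ord ∧
  ∀ i, ∀ a ∈ G.strat i, ∀ ord' : ρ → τ → ℕ, IsReorder ord ord' (a \ s i) →
    G.ordUtil (Function.update s i a) ord' i ≤ G.ordUtil s ord i

/-- Strong equilibrium: no coalition can deviate (new tasks appended) so that
every member strictly improves. -/
def IsStrongEq (G : BudgetGame ι ρ τ) (s : ι → Finset τ) (ord : ρ → τ → ℕ) : Prop :=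
  G.Valid s ∧ InjOrd ord ∧
  ¬ ∃ (C : Finset ι) (s' : ι → Finset τ) (ord' : ρ → τ → ℕ),
      C.Nonempty ∧ G.Valid s' ∧ (∀ j ∉ C, s' j = s j) ∧
      IsReorder ord ord' (newTasks C s s') ∧
      ∀ i ∈ C, G.ordUtil s ord i < G.ordUtil s' ord' i

/-- Super strong equilibrium: no coalition can deviate (new tasks appended) so that
every member weakly improves and at least one member strictly improves. -/
def IsSuperStrongEq (G : BudgetGame ι ρ τ) (s : ι → Finset τ) (ord : ρ → τ → ℕ) : Prop :=
  G.Valid s ∧ InjOrd ord ∧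
  ¬ ∃ (C : Finset ι) (s' : ι → Finset τ) (ord' : ρ → τ → ℕ),
      C.Nonempty ∧ G.Valid s' ∧ (∀ j ∉ C, s' j = s j) ∧
      IsReorder ord ord' (newTasks C s s') ∧
      (∀ i ∈ C, G.ordUtil s ord i ≤ G.ordUtil s' ord' i) ∧
      (∃ i ∈ C, G.ordUtil s ord i < G.ordUtil s' ord' i)

end BudgetGame

/-! Two players each choose one of two single tasks. With unit budgets a task `t` facing the
opposing task `t'` earns `∑ r, t(r) / (t(r) + t'(r))`, and the demands below make the best
responses cycle through all four profiles: `(0,2) → (1,2) → (1,3) → (0,3) → (0,2)`. -/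

namespace BudgetGame

variable {ι ρ τ : Type*} [Fintype ι] [Fintype ρ] [Fintype τ] [DecidableEq ι] [DecidableEq τ]

theorem not_stdNE_of_stdUtil_lt {G : BudgetGame ι ρ τ} {s : ι → Finset τ} {i : ι}
    {a : Finset τ} (ha : a ∈ G.strat i)
    (hlt : G.stdUtil s i < G.stdUtil (Function.update s i a) i) : ¬ G.stdNE s :=
  fun hs => (hs.2 i a ha).not_gt hlt

def duelUtil (G : BudgetGame ι ρ τ) (t t' : τ) : ℝ :=
  ∑ r, min (G.demand t r) (G.budget r * G.demand t r / (G.demand t r + G.demand t' r))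

section TwoPlayers

variable {G : BudgetGame (Fin 2) ρ τ} {s : Fin 2 → Finset τ} {a b : τ}

theorem totalDemand_of_singletons (h0 : s 0 = {a}) (h1 : s 1 = {b}) (r : ρ) :
    G.totalDemand s r = G.demand a r + G.demand b r := by
  simp [totalDemand, Fin.sum_univ_two, h0, h1]

theorem stdUtil_zero_of_singletons (h0 : s 0 = {a}) (h1 : s 1 = {b}) :
    G.stdUtil s 0 = G.duelUtil a b := by
  simp [stdUtil, stdTaskUtil, duelUtil, h0, totalDemand_of_singletons h0 h1]

theorem stdUtil_one_of_singletons (h0 : s 0 = {a}) (h1 : s 1 = {b}) :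
    G.stdUtil s 1 = G.duelUtil b a := by
  simp [stdUtil, stdTaskUtil, duelUtil, h1, totalDemand_of_singletons h0 h1, add_comm]

theorem not_stdNE_of_duelUtil_lt_zero {a' : τ} (h0 : s 0 = {a}) (h1 : s 1 = {b})
    (ha' : {a'} ∈ G.strat 0) (hlt : G.duelUtil a b < G.duelUtil a' b) : ¬ G.stdNE s := by
  refine not_stdNE_of_stdUtil_lt ha' ?_
  rwa [stdUtil_zero_of_singletons h0 h1,
    stdUtil_zero_of_singletons (Function.update_self 0 _ s) (by simpa using h1)]

theorem not_stdNE_of_duelUtil_lt_one {b' : τ} (h0 : s 0 = {a}) (h1 : s 1 = {b})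
    (hb' : {b'} ∈ G.strat 1) (hlt : G.duelUtil b a < G.duelUtil b' a) : ¬ G.stdNE s := by
  refine not_stdNE_of_stdUtil_lt hb' ?_
  rwa [stdUtil_one_of_singletons h0 h1,
    stdUtil_one_of_singletons (by simpa using h0) (Function.update_self 1 _ s)]

end TwoPlayers

end BudgetGame

open BudgetGame

def cycleGame : BudgetGame (Fin 2) (Fin 3) (Fin 4) where
  budget := fun _ => 1
  budget_pos := fun _ => one_pos
  demand := ![![0, 2, 1], ![3, 0, 1], ![2, 3, 2], ![3, 1, 3]]
  demand_nonneg := by intro t r; fin_cases t <;> fin_cases r <;> norm_num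
  owner := ![0, 0, 1, 1]
  strat := ![{{0}, {1}}, {{2}, {3}}]
  strat_nonempty := by decide
  strat_owned := by decide

theorem cycleGame_duelUtil_cycle :
    cycleGame.duelUtil 0 2 < cycleGame.duelUtil 1 2 ∧
    cycleGame.duelUtil 2 1 < cycleGame.duelUtil 3 1 ∧
    cycleGame.duelUtil 1 3 < cycleGame.duelUtil 0 3 ∧
    cycleGame.duelUtil 3 0 < cycleGame.duelUtil 2 0 := by
  simp only [duelUtil, cycleGame, Fin.sum_univ_three, Matrix.cons_val_zero, Matrix.cons_val_one,
    Matrix.cons_val_two, Matrix.cons_val_three, Matrix.head_cons, Matrix.tail_cons]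
  norm_num [min_def]

open BudgetGame in
/-- there exists a standard budget game that admits no pure Nash
equilibrium. -/
theorem stmt_3 :
    ∃ (n m k : ℕ) (G : BudgetGame (Fin n) (Fin m) (Fin k)),
      ¬ ∃ s : Fin n → Finset (Fin k), G.stdNE s := by
  refine ⟨2, 3, 4, cycleGame, ?_⟩
  rintro ⟨s, hNE⟩
  obtain ⟨h02, h21, h13, h30⟩ := cycleGame_duelUtil_cycle
  have hs0 : s 0 = {0} ∨ s 0 = {1} := by simpa [cycleGame] using hNE.1 0
  have hs1 : s 1 = {2} ∨ s 1 = {3} := by simpa [cycleGame] using hNE.1 1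
  rcases hs0 with h0 | h0 <;> rcases hs1 with h1 | h1
  · exact not_stdNE_of_duelUtil_lt_zero h0 h1 (by decide) h02 hNE
  · exact not_stdNE_of_duelUtil_lt_one h0 h1 (by decide) h30 hNE
  · exact not_stdNE_of_duelUtil_lt_one h0 h1 (by decide) h21 hNE
  · exact not_stdNE_of_duelUtil_lt_zero h0 h1 (by decide) h13 hNE

end
end

section
/- If a standard budget game admits a pure Nash equilibrium s, then every strategy profile s* satisfies u(s*) ≤ 2·u(s); i.e., the price of anarchy of standard budget games is at most 2. -/
noncomputable section

open Finset

/-!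
The welfare of a profile is `∑ r, min (D_r, b_r)`: on each resource the tasks share exactly
`min (D_r, b_r)`. If player `i` of an equilibrium `s` deviates to `s*_i`, the load on `r` is at most
`D_r(s) + D_r(s*)`, so each of her new tasks gets at least its proportional share under that load;
summing the equilibrium inequalities over all players gives
`∑ r, D_r(s*) · min (1, b_r / (D_r(s) + D_r(s*))) ≤ u(s)`.
The pointwise inequality `min (x, b) ≤ x · min (1, b / (y + x)) + min (y, b)` then yields
`u(s*) ≤ 2 · u(s)`.
-/

theorem min_mul_div_eq_mul_min_one_div {a : ℝ} (b c : ℝ) (ha : 0 ≤ a) :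
    min a (b * a / c) = a * min 1 (b / c) := by
  rw [mul_min_of_nonneg _ _ ha, mul_one, mul_div_assoc', mul_comm a b]

theorem mul_min_one_div_self {x b : ℝ} (hx : 0 ≤ x) (hb : 0 ≤ b) :
    x * min 1 (b / x) = min x b := by
  rcases hx.eq_or_lt with rfl | hx
  · simp [hb]
  · rw [mul_min_of_nonneg _ _ hx.le, mul_one, mul_div_cancel₀ _ hx.ne']

theorem min_mul_div_le_of_le {a b c₁ c₂ : ℝ} (ha : 0 ≤ a) (hb : 0 ≤ b) (h₁ : a ≤ c₁)
    (h₂ : c₁ ≤ c₂) : min a (b * a / c₂) ≤ min a (b * a / c₁) := by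
  rcases ha.eq_or_lt with rfl | ha
  · simp
  · have := ha.trans_le h₁
    gcongr

theorem min_le_mul_min_one_div_add_min {x y b : ℝ} (hx : 0 ≤ x) (hy : 0 ≤ y) (hb : 0 ≤ b) :
    min x b ≤ x * min 1 (b / (y + x)) + min y b := by
  rcases hx.eq_or_lt with rfl | hx
  · simp [hy, hb]
  have hyx : 0 < y + x := by linarith
  rcases le_or_gt (y + x) b with hle | hlt
  · rw [min_eq_left ((one_le_div hyx).2 hle), mul_one]
    linarith [min_le_left x b, le_min hy hb]
  rw [min_eq_right ((div_le_one hyx).2 hlt.le)]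
  rcases le_total b y with hby | hyb
  · rw [min_eq_right hby]
    linarith [min_le_right x b, mul_nonneg hx.le (div_nonneg hb hyx.le)]
  -- `x b / (y + x) + y - b = y (y + x - b) / (y + x) ≥ 0`
  have hshare : b ≤ x * (b / (y + x)) + y := by
    rw [mul_div_assoc', div_add' _ _ _ hyx.ne', le_div_iff₀ hyx]
    nlinarith
  rw [min_eq_left hyb]
  linarith [min_le_right x b]

namespace BudgetGame

variable {ι ρ τ : Type*} [Fintype ι] [Fintype ρ] [Fintype τ] [DecidableEq ι] [DecidableEq τ]
  (G : BudgetGame ι ρ τ)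

/-- The proportional share of task `t` on resource `r` when the total demand on `r` is `c r`. -/
def propShare (c : ρ → ℝ) (t : τ) (r : ρ) : ℝ :=
  min (G.demand t r) (G.budget r * G.demand t r / c r)

theorem totalDemand_nonneg (s : ι → Finset τ) (r : ρ) : 0 ≤ G.totalDemand s r :=
  sum_nonneg fun _ _ => sum_nonneg fun t _ => G.demand_nonneg t r

theorem demand_le_totalDemand {s : ι → Finset τ} {i : ι} {t : τ} (ht : t ∈ s i) (r : ρ) :
    G.demand t r ≤ G.totalDemand s r :=
  (single_le_sum (fun t' _ => G.demand_nonneg t' r) ht).trans <|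
    single_le_sum (f := fun j => ∑ t' ∈ s j, G.demand t' r)
      (fun _ _ => sum_nonneg fun t' _ => G.demand_nonneg t' r) (mem_univ i)

theorem totalDemand_update_le (s s' : ι → Finset τ) (i : ι) (r : ρ) :
    G.totalDemand (Function.update s i (s' i)) r ≤ G.totalDemand s r + G.totalDemand s' r := by
  rw [totalDemand, totalDemand, totalDemand, ← sum_add_distrib]
  refine sum_le_sum fun j _ => ?_
  have h := sum_nonneg fun t (_ : t ∈ s j) => G.demand_nonneg t r
  have h' := sum_nonneg fun t (_ : t ∈ s' j) => G.demand_nonneg t r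
  rcases eq_or_ne j i with rfl | hj
  · rw [Function.update_self]
    linarith
  · rw [Function.update_of_ne hj]
    linarith

theorem sum_propShare (s : ι → Finset τ) (c : ρ → ℝ) :
    ∑ i, ∑ t ∈ s i, ∑ r, G.propShare c t r
      = ∑ r, G.totalDemand s r * min 1 (G.budget r / c r) := by
  simp only [propShare, min_mul_div_eq_mul_min_one_div _ _ (G.demand_nonneg _ _), totalDemand,
    sum_mul]
  rw [sum_comm]
  exact sum_congr rfl fun i _ => sum_comm

theorem stdWelfare_eq_sum_min (s : ι → Finset τ) :
    G.stdWelfare s = ∑ r, min (G.totalDemand s r) (G.budget r) := by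
  rw [← sum_congr rfl fun r _ =>
    mul_min_one_div_self (G.totalDemand_nonneg s r) (G.budget_pos r).le]
  exact G.sum_propShare s (G.totalDemand s)

theorem sum_propShare_le_stdUtil_update (s s' : ι → Finset τ) (i : ι) :
    ∑ t ∈ s' i, ∑ r, G.propShare (fun r => G.totalDemand s r + G.totalDemand s' r) t r
      ≤ G.stdUtil (Function.update s i (s' i)) i := by
  rw [stdUtil, Function.update_self]
  refine sum_le_sum fun t ht => sum_le_sum fun r _ => ?_
  have ht' : t ∈ Function.update s i (s' i) i := by rwa [Function.update_self]
  exact min_mul_div_le_of_le (G.demand_nonneg t r) (G.budget_pos r).le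
    (G.demand_le_totalDemand ht' r) (G.totalDemand_update_le s s' i r)

theorem stdNE.sum_mul_min_le_stdWelfare {G : BudgetGame ι ρ τ} {s s' : ι → Finset τ}
    (hNE : G.stdNE s) (hs' : G.Valid s') :
    ∑ r, G.totalDemand s' r * min 1 (G.budget r / (G.totalDemand s r + G.totalDemand s' r))
      ≤ G.stdWelfare s :=
  (G.sum_propShare s' fun r => G.totalDemand s r + G.totalDemand s' r).symm.trans_le <|
    sum_le_sum fun i _ =>
      (G.sum_propShare_le_stdUtil_update s s' i).trans (hNE.2 i (s' i) (hs' i))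

end BudgetGame

open BudgetGame in
/-- if a standard budget game admits a pure Nash equilibrium `s`, then
every strategy profile `s*` satisfies `u(s*) ≤ 2·u(s)` (price of anarchy at most 2). -/
theorem stmt_4 {ι ρ τ : Type*} [Fintype ι] [Fintype ρ] [Fintype τ]
    [DecidableEq ι] [DecidableEq τ]
    (G : BudgetGame ι ρ τ) (s sstar : ι → Finset τ)
    (hNE : G.stdNE s) (hstar : G.Valid sstar) :
    G.stdWelfare sstar ≤ 2 * G.stdWelfare s := by
  calc G.stdWelfare sstar = ∑ r, min (G.totalDemand sstar r) (G.budget r) :=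
        G.stdWelfare_eq_sum_min sstar
    _ ≤ ∑ r, (G.totalDemand sstar r
            * min 1 (G.budget r / (G.totalDemand s r + G.totalDemand sstar r))
          + min (G.totalDemand s r) (G.budget r)) :=
        sum_le_sum fun r _ => min_le_mul_min_one_div_add_min (G.totalDemand_nonneg sstar r)
          (G.totalDemand_nonneg s r) (G.budget_pos r).le
    _ ≤ G.stdWelfare s + G.stdWelfare s := by
        rw [sum_add_distrib, ← G.stdWelfare_eq_sum_min s]
        exact add_le_add_left (hNE.sum_mul_min_le_stdWelfare hstar) _
    _ = 2 * G.stdWelfare s := (two_mul _).symm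

end
end

section
/- For every δ > 0 there exists a standard budget game with a pure Nash equilibrium s and a strategy profile s* such that u(s*) > (2 − δ)·u(s); i.e., the price of anarchy of standard budget games comes arbitrarily close to 2. -/
noncomputable section

open Finset

/-! Player 0 owns a single task, of demand 1 on resource 0, whose budget is 1. Player 1 either
puts a task of demand `M` on resource 0 or a task of demand 1 on resource 1, whose budget is
`M/(1+M)`. When both players use resource 0 its budget is shared proportionally, so player 1 gets
`M/(1+M)`, exactly what she would get alone on resource 1: this is an equilibrium of welfare 1.
Moving player 1 to resource 1 gives welfare `1 + M/(1+M)`, which tends to 2. -/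

namespace BudgetGame

section StdTaskUtil

variable {ι ρ τ : Type*} [Fintype ι] [Fintype ρ] [Fintype τ] [DecidableEq ι] [DecidableEq τ]
  (G : BudgetGame ι ρ τ) (s : ι → Finset τ)

theorem stdTaskUtil_of_budget_le {t : τ} {r : ρ} (h : G.budget r ≤ G.totalDemand s r) :
    G.stdTaskUtil s t r = G.budget r * G.demand t r / G.totalDemand s r := by
  have hD : 0 < G.totalDemand s r := (G.budget_pos r).trans_le h
  refine min_eq_right ?_
  rw [mul_div_right_comm]
  exact mul_le_of_le_one_left (G.demand_nonneg t r) ((div_le_one hD).2 h)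

theorem stdTaskUtil_of_demand_eq_zero {t : τ} {r : ρ} (h : G.demand t r = 0) :
    G.stdTaskUtil s t r = 0 := by
  simp [stdTaskUtil, h]

theorem stdUtil_of_eq_singleton {i : ι} {t : τ} (h : s i = {t}) :
    G.stdUtil s i = ∑ r, G.stdTaskUtil s t r := by
  rw [stdUtil, h, Finset.sum_singleton]

end StdTaskUtil

def twoResourceGame (M : ℝ) (hM : 0 < M) : BudgetGame (Fin 2) (Fin 2) (Fin 3) where
  budget := ![1, M / (1 + M)]
  budget_pos := Fin.forall_fin_two.2 ⟨one_pos, div_pos hM (by positivity)⟩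
  demand := ![![1, 0], ![M, 0], ![0, 1]]
  demand_nonneg := by simp [Fin.forall_fin_succ, hM.le]
  owner := ![0, 1, 1]
  strat := ![{{0}}, {{1}, {2}}]
  strat_nonempty := by simp [Fin.forall_fin_two]
  strat_owned := by decide

def eqProfile : Fin 2 → Finset (Fin 3) := ![{0}, {1}]

def optProfile : Fin 2 → Finset (Fin 3) := ![{0}, {2}]

section TwoResourceGame

variable {M : ℝ} (hM : 0 < M)

theorem twoResourceGame_totalDemand :
    (twoResourceGame M hM).totalDemand eqProfile 0 = 1 + M ∧
      (twoResourceGame M hM).totalDemand optProfile 0 = 1 ∧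
      (twoResourceGame M hM).totalDemand optProfile 1 = 1 := by
  simp [totalDemand, twoResourceGame, eqProfile, optProfile, Fin.sum_univ_two]

theorem twoResourceGame_stdUtil_eqProfile :
    (twoResourceGame M hM).stdUtil eqProfile 0 = 1 / (1 + M) ∧
      (twoResourceGame M hM).stdUtil eqProfile 1 = M / (1 + M) := by
  obtain ⟨hD, -, -⟩ := twoResourceGame_totalDemand hM
  have hcongested :
      (twoResourceGame M hM).budget 0 ≤ (twoResourceGame M hM).totalDemand eqProfile 0 := by
    rw [hD]
    show (1 : ℝ) ≤ 1 + M
    linarith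
  constructor
  · rw [stdUtil_of_eq_singleton _ eqProfile (t := 0) rfl, Fin.sum_univ_two,
      stdTaskUtil_of_budget_le _ _ hcongested, hD]
    simp [stdTaskUtil_of_demand_eq_zero, twoResourceGame]
  · rw [stdUtil_of_eq_singleton _ eqProfile (t := 1) rfl, Fin.sum_univ_two,
      stdTaskUtil_of_budget_le _ _ hcongested, hD]
    simp [stdTaskUtil_of_demand_eq_zero, twoResourceGame]

theorem twoResourceGame_stdUtil_optProfile :
    (twoResourceGame M hM).stdUtil optProfile 0 = 1 ∧
      (twoResourceGame M hM).stdUtil optProfile 1 = M / (1 + M) := by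
  obtain ⟨-, hD₀, hD₁⟩ := twoResourceGame_totalDemand hM
  have hcongested₀ :
      (twoResourceGame M hM).budget 0 ≤ (twoResourceGame M hM).totalDemand optProfile 0 :=
    hD₀.ge
  have hcongested₁ :
      (twoResourceGame M hM).budget 1 ≤ (twoResourceGame M hM).totalDemand optProfile 1 := by
    rw [hD₁]
    show M / (1 + M) ≤ 1
    rw [div_le_one (by positivity)]
    linarith
  constructor
  · rw [stdUtil_of_eq_singleton _ optProfile (t := 0) rfl, Fin.sum_univ_two,
      stdTaskUtil_of_budget_le _ _ hcongested₀, hD₀]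
    simp [stdTaskUtil_of_demand_eq_zero, twoResourceGame]
  · rw [stdUtil_of_eq_singleton _ optProfile (t := 2) rfl, Fin.sum_univ_two,
      stdTaskUtil_of_budget_le _ _ hcongested₁, hD₁]
    simp [stdTaskUtil_of_demand_eq_zero, twoResourceGame]

theorem twoResourceGame_stdWelfare_eqProfile :
    (twoResourceGame M hM).stdWelfare eqProfile = 1 := by
  obtain ⟨h₀, h₁⟩ := twoResourceGame_stdUtil_eqProfile hM
  rw [stdWelfare, Fin.sum_univ_two, h₀, h₁, ← add_div, div_self (by positivity)]

theorem twoResourceGame_stdWelfare_optProfile :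
    (twoResourceGame M hM).stdWelfare optProfile = 1 + M / (1 + M) := by
  obtain ⟨h₀, h₁⟩ := twoResourceGame_stdUtil_optProfile hM
  rw [stdWelfare, Fin.sum_univ_two, h₀, h₁]

theorem twoResourceGame_valid_optProfile : (twoResourceGame M hM).Valid optProfile := by
  simp [Valid, Fin.forall_fin_two, twoResourceGame, optProfile]

theorem twoResourceGame_stdNE_eqProfile : (twoResourceGame M hM).stdNE eqProfile := by
  refine ⟨by simp [Valid, Fin.forall_fin_two, twoResourceGame, eqProfile], ?_⟩
  have stay (i : Fin 2) :
      (twoResourceGame M hM).stdUtil (Function.update eqProfile i (eqProfile i)) i ≤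
        (twoResourceGame M hM).stdUtil eqProfile i := by
    rw [Function.update_eq_self]
  rw [Fin.forall_fin_two]
  refine ⟨fun a ha => ?_, fun a ha => ?_⟩
  · obtain rfl : a = {0} := by simpa [twoResourceGame] using ha
    exact stay 0
  · obtain rfl | rfl : a = {1} ∨ a = {2} := by simpa [twoResourceGame] using ha
    · exact stay 1
    · have hdev : Function.update eqProfile 1 {2} = optProfile := by decide
      rw [hdev, (twoResourceGame_stdUtil_optProfile hM).2, (twoResourceGame_stdUtil_eqProfile hM).2]

end TwoResourceGame

end BudgetGame

open BudgetGame in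
/-- for every `δ > 0` there is a standard budget game with a pure Nash
equilibrium `s` and a strategy profile `s*` with `u(s*) > (2 − δ)·u(s)`. -/
theorem stmt_5 (δ : ℝ) (hδ : 0 < δ) :
    ∃ (n m k : ℕ) (G : BudgetGame (Fin n) (Fin m) (Fin k))
      (s sstar : Fin n → Finset (Fin k)),
      G.stdNE s ∧ G.Valid sstar ∧
      (2 - δ) * G.stdWelfare s < G.stdWelfare sstar := by
  have hM : 0 < 1 / δ := by positivity
  refine ⟨2, 2, 3, twoResourceGame (1 / δ) hM, eqProfile, optProfile,
    twoResourceGame_stdNE_eqProfile hM, twoResourceGame_valid_optProfile hM, ?_⟩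
  have hshare : 1 / δ / (1 + 1 / δ) = 1 / (1 + δ) := by field_simp; ring
  rw [twoResourceGame_stdWelfare_eqProfile, twoResourceGame_stdWelfare_optProfile, hshare, mul_one]
  have hgap : 1 - δ < 1 / (1 + δ) := by
    rw [lt_div_iff₀ (by positivity)]
    nlinarith
  linarith

end
end

section
/- In an ordered budget game, if a set C of players changes strategies from state (s,≺) to state (s',≺') — where s'_j = s_j for j ∉ C and the new ordering ≺' keeps the relative order of all tasks not newly chosen and places every newly chosen task after all of them on every resource — then u_j(s',≺') ≥ u_j(s,≺) for every player j ∉ C. -/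
noncomputable section

open Finset

/-!
A player `j ∉ C` keeps her tasks, and none of them is newly chosen, since tasks belong to
their owner. New tasks are appended behind every old one, so after the deviation the chosen
tasks ahead of an old task `t` on `r` are old tasks that were already ahead of `t` before.
Their total demand can only drop, and the utility of `t` from `r` is antitone in it.
-/

namespace BudgetGame

variable {ι ρ τ : Type*} [DecidableEq τ]

theorem mem_and_lt_of_reorder {C : Finset ι} {s s' : ι → Finset τ} {ord ord' : ρ → τ → ℕ}
    (hfix : ∀ j ∉ C, s' j = s j) (hre : IsReorder ord ord' (newTasks C s s'))
    {t : τ} (ht : t ∉ newTasks C s s') (r : ρ) (i : ι) {t' : τ} (ht' : t' ∈ s' i)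
    (hlt : ord' r t' < ord' r t) : t' ∈ s i ∧ ord r t' < ord r t := by
  have ht'_old : t' ∉ newTasks C s s' := fun hnew =>
    (hre.2.2 r t ht t' hnew).not_gt hlt
  refine ⟨?_, (hre.2.1 r t' ht'_old t ht).1 hlt⟩
  by_cases hiC : i ∈ C
  · by_contra ht's
    exact ht'_old (mem_biUnion.2 ⟨i, hiC, mem_sdiff.2 ⟨ht', ht's⟩⟩)
  · rwa [← hfix i hiC]

variable [Fintype ι] [Fintype ρ] [Fintype τ] [DecidableEq ι]

theorem Valid.owner_eq {G : BudgetGame ι ρ τ} {s : ι → Finset τ} (hs : G.Valid s) {i : ι}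
    {t : τ} (ht : t ∈ s i) : G.owner t = i :=
  G.strat_owned i (s i) (hs i) t ht

theorem notMem_newTasks_of_owner_notMem {G : BudgetGame ι ρ τ} {C : Finset ι}
    {s s' : ι → Finset τ} (hs' : G.Valid s') {t : τ} (ht : G.owner t ∉ C) :
    t ∉ newTasks C s s' := by
  intro hnew
  obtain ⟨i, hiC, hti⟩ := mem_biUnion.1 hnew
  exact ht (hs'.owner_eq (mem_sdiff.1 hti).1 ▸ hiC)

theorem prefixDemand_le_of_forall_mem (G : BudgetGame ι ρ τ) {s s' : ι → Finset τ}
    {ord ord' : ρ → τ → ℕ} {t : τ} {r : ρ}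
    (h : ∀ i, ∀ t' ∈ s' i, ord' r t' < ord' r t → t' ∈ s i ∧ ord r t' < ord r t) :
    G.prefixDemand s' ord' t r ≤ G.prefixDemand s ord t r := by
  refine sum_le_sum fun i _ => sum_le_sum_of_subset_of_nonneg ?_
    fun t' _ _ => G.demand_nonneg t' r
  intro t' ht'
  rw [mem_filter] at ht' ⊢
  exact h i t' ht'.1 ht'.2

theorem ordTaskUtil_le_of_prefixDemand_le (G : BudgetGame ι ρ τ) {s s' : ι → Finset τ}
    {ord ord' : ρ → τ → ℕ} {t : τ} {r : ρ}
    (h : G.prefixDemand s' ord' t r ≤ G.prefixDemand s ord t r) :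
    G.ordTaskUtil s ord t r ≤ G.ordTaskUtil s' ord' t r :=
  min_le_min le_rfl (max_le_max le_rfl (sub_le_sub_left h _))

end BudgetGame

open BudgetGame in
theorem stmt_7_general {ι ρ τ : Type*} [Fintype ι] [Fintype ρ] [Fintype τ]
    [DecidableEq ι] [DecidableEq τ]
    (G : BudgetGame ι ρ τ) (s s' : ι → Finset τ) (ord ord' : ρ → τ → ℕ)
    (C : Finset ι)
    (hs : G.Valid s) (hs' : G.Valid s')
    (hfix : ∀ j ∉ C, s' j = s j)
    (hre : IsReorder ord ord' (newTasks C s s')) :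
    ∀ j ∉ C, G.ordUtil s ord j ≤ G.ordUtil s' ord' j := by
  intro j hj
  unfold ordUtil
  rw [hfix j hj]
  refine sum_le_sum fun t ht => sum_le_sum fun r _ => ?_
  have ht_old : t ∉ newTasks C s s' :=
    notMem_newTasks_of_owner_notMem hs' (hs.owner_eq ht ▸ hj)
  exact G.ordTaskUtil_le_of_prefixDemand_le <| G.prefixDemand_le_of_forall_mem <|
    mem_and_lt_of_reorder hfix hre ht_old r

open BudgetGame in
/-- if a set `C` of players changes strategies (newly chosen tasks
appended at the end of every resource order), every player outside `C` weakly
improves. -/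
theorem stmt_7 {ι ρ τ : Type*} [Fintype ι] [Fintype ρ] [Fintype τ]
    [DecidableEq ι] [DecidableEq τ]
    (G : BudgetGame ι ρ τ) (s s' : ι → Finset τ) (ord ord' : ρ → τ → ℕ)
    (C : Finset ι)
    (hs : G.Valid s) (hs' : G.Valid s') (hord : InjOrd ord)
    (hfix : ∀ j ∉ C, s' j = s j)
    (hre : IsReorder ord ord' (newTasks C s s')) :
    ∀ j ∉ C, G.ordUtil s ord j ≤ G.ordUtil s' ord' j :=
  stmt_7_general G s s' ord ord' C hs hs' hfix hre
end
end

section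
/- In an ordered budget game, insert the players 1,…,n one after another, where each inserted player i chooses a strategy maximizing her utility against the strategies already chosen by players 1,…,i−1, and at insertion each of her chosen tasks is appended at the end of every resource's order. Then the resulting state (s,≺) is a strong equilibrium: no coalition C ⊆ N of players can jointly change strategies (newly chosen tasks appended at the end of every resource order) so that every member of C strictly increases her utility. In particular, every ordered budget game has a strong equilibrium. -/
noncomputable section

open Finset

open BudgetGame in
/-- The profile in which players `j < i` play `s j`, player `i` plays `a` and the
players after `i` have not been inserted yet. -/
def partialProf {n : ℕ} {τ : Type*} [DecidableEq τ]
    (s : Fin n → Finset τ) (i : Fin n) (a : Finset τ) : Fin n → Finset τ :=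
  fun j => if j < i then s j else if j = i then a else ∅

/-! In a deviation of a coalition `C`, look at its first member `i` in insertion order. Dropping
the tasks of the players after `i` can only raise her utility, and what is left is the situation
at her insertion, with her new strategy appended behind the tasks of the earlier players; there
she gains nothing over her best response `s i`. Finally, the later players' tasks sit behind all
of hers in `≺`, so her utility at insertion is her utility in `(s, ≺)`. -/

section PartialProf

variable {n : ℕ} {τ : Type*} [DecidableEq τ] {s : Fin n → Finset τ} {i j : Fin n}
  {a : Finset τ}

lemma partialProf_of_lt (h : j < i) : partialProf s i a j = s j := if_pos h

@[simp]
lemma partialProf_self : partialProf s i a i = a := by simp [partialProf]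

lemma partialProf_of_gt (h : i < j) : partialProf s i a j = ∅ := by
  simp [partialProf, h.not_gt, h.ne']

lemma partialProf_self_of_le (h : j ≤ i) : partialProf s i (s i) j = s j := by
  rcases h.lt_or_eq with h | rfl
  · exact partialProf_of_lt h
  · exact partialProf_self

lemma partialProf_subset {s' : Fin n → Finset τ} (h : ∀ j < i, s' j = s j) (j : Fin n) :
    partialProf s i (s' i) j ⊆ s' j := by
  rcases lt_trichotomy j i with hj | rfl | hj
  · rw [partialProf_of_lt hj, h j hj]
  · rw [partialProf_self]
  · rw [partialProf_of_gt hj]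
    exact empty_subset _

end PartialProf

namespace BudgetGame

section Ordering

variable {ρ τ : Type*} [Fintype τ] [DecidableEq τ]

/-- Shifting by `univ.sup (ord r) + 1` puts the tasks of `a` behind all other tasks. -/
def appendOrd (ord ord' : ρ → τ → ℕ) (a : Finset τ) : ρ → τ → ℕ :=
  fun r t => if t ∈ a then univ.sup (ord r) + 1 + ord' r t else ord r t

variable {ord ord' : ρ → τ → ℕ} {a : Finset τ} {r : ρ} {x y : τ}

lemma appendOrd_lt_of_notMem_of_mem (hx : x ∉ a) (hy : y ∈ a) :
    appendOrd ord ord' a r x < appendOrd ord ord' a r y := by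
  have : ord r x ≤ univ.sup (ord r) := le_sup (mem_univ x)
  simp only [appendOrd, if_neg hx, if_pos hy]
  omega

lemma appendOrd_lt_appendOrd_iff_of_mem (hx : x ∈ a) (hy : y ∈ a) :
    appendOrd ord ord' a r x < appendOrd ord ord' a r y ↔ ord' r x < ord' r y := by
  simp only [appendOrd, if_pos hx, if_pos hy]
  omega

lemma isReorder_appendOrd (hord : InjOrd ord) (hord' : InjOrd ord') :
    IsReorder ord (appendOrd ord ord' a) a := by
  refine ⟨fun r x y hxy => ?_, fun r x hx y hy => ?_,
    fun r x hx y hy => appendOrd_lt_of_notMem_of_mem hx hy⟩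
  · by_cases hx : x ∈ a <;> by_cases hy : y ∈ a
    · simp only [appendOrd, if_pos hx, if_pos hy] at hxy
      exact hord' r (by omega)
    · exact absurd hxy.symm (appendOrd_lt_of_notMem_of_mem hy hx).ne
    · exact absurd hxy (appendOrd_lt_of_notMem_of_mem hx hy).ne
    · simp only [appendOrd, if_neg hx, if_neg hy] at hxy
      exact hord r hxy
  · simp only [appendOrd, if_neg hx, if_neg hy]

end Ordering

section Utility

variable {ι ρ τ : Type*} [Fintype ι] [Fintype ρ] [Fintype τ] [DecidableEq ι] [DecidableEq τ]
  (G : BudgetGame ι ρ τ) {s s₁ s₂ : ι → Finset τ} {ord ord₁ ord₂ : ρ → τ → ℕ} {i j : ι}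
  {t : τ} {r : ρ}

section Ownership

variable {G}

lemma Valid.owner_eq_s10 (hs : G.Valid s) (ht : t ∈ s j) : G.owner t = j :=
  G.strat_owned j (s j) (hs j) t ht

lemma Valid.eq_of_mem_of_mem {s' : ι → Finset τ} (hs : G.Valid s) (hs' : G.Valid s')
    (ht : t ∈ s j) (ht' : t ∈ s' i) : j = i :=
  (hs.owner_eq_s10 ht).symm.trans (hs'.owner_eq_s10 ht')

lemma notMem_newTasks_of_mem {s' : ι → Finset τ} {C : Finset ι} (hs : G.Valid s)
    (hs' : G.Valid s') (ht : t ∈ s j) : t ∉ newTasks C s s' := by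
  simp only [newTasks, mem_biUnion, mem_sdiff, not_exists, not_and]
  intro k _ htk
  rw [← hs.eq_of_mem_of_mem hs' ht htk]
  exact not_not_intro ht

end Ownership

lemma prefixDemand_mono (h : ∀ j, s₁ j ⊆ s₂ j) (ord : ρ → τ → ℕ) (t : τ) (r : ρ) :
    G.prefixDemand s₁ ord t r ≤ G.prefixDemand s₂ ord t r :=
  sum_le_sum fun j _ => sum_le_sum_of_subset_of_nonneg (filter_subset_filter _ (h j))
    fun t' _ _ => G.demand_nonneg t' r

lemma prefixDemand_congr_ord
    (h : ∀ j, ∀ t' ∈ s j, (ord₁ r t' < ord₁ r t ↔ ord₂ r t' < ord₂ r t)) :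
    G.prefixDemand s ord₁ t r = G.prefixDemand s ord₂ t r :=
  sum_congr rfl fun j _ => by rw [filter_congr (h j)]

lemma prefixDemand_congr_profile
    (h : ∀ j t', ord r t' < ord r t → (t' ∈ s₁ j ↔ t' ∈ s₂ j)) :
    G.prefixDemand s₁ ord t r = G.prefixDemand s₂ ord t r :=
  sum_congr rfl fun j _ => by
    congr 1
    ext t'
    simp only [mem_filter]
    exact ⟨fun ⟨h₁, h₂⟩ => ⟨(h j t' h₂).1 h₁, h₂⟩, fun ⟨h₁, h₂⟩ => ⟨(h j t' h₂).2 h₁, h₂⟩⟩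

lemma ordUtil_le_of_subset (h : ∀ j, s₁ j ⊆ s₂ j) (hi : s₁ i = s₂ i) (ord : ρ → τ → ℕ) :
    G.ordUtil s₂ ord i ≤ G.ordUtil s₁ ord i := by
  unfold ordUtil
  rw [← hi]
  refine sum_le_sum fun t _ => sum_le_sum fun r _ => min_le_min le_rfl (max_le_max le_rfl ?_)
  linarith [G.prefixDemand_mono h ord t r]

lemma ordUtil_congr (hi : s₁ i = s₂ i)
    (h : ∀ t ∈ s₁ i, ∀ r, G.prefixDemand s₁ ord₁ t r = G.prefixDemand s₂ ord₂ t r) :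
    G.ordUtil s₁ ord₁ i = G.ordUtil s₂ ord₂ i := by
  unfold ordUtil ordTaskUtil
  rw [← hi]
  exact sum_congr rfl fun t ht => sum_congr rfl fun r _ => by rw [h t ht r]

end Utility

section Insertion

variable {n : ℕ} {ρ τ : Type*} [Fintype ρ] [Fintype τ] [DecidableEq τ]
  (G : BudgetGame (Fin n) ρ τ) {s : Fin n → Finset τ} {ord ord' : ρ → τ → ℕ} {i : Fin n}
  {a : Finset τ}

lemma ordUtil_partialProf_appendOrd (hdisj : ∀ j < i, ∀ t ∈ s j, t ∉ a)
    (hfirst : ∀ r, ∀ j < i, ∀ t' ∈ s j, ∀ t ∈ a, ord' r t' < ord' r t) :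
    G.ordUtil (partialProf s i a) ord' i =
      G.ordUtil (partialProf s i a) (appendOrd ord ord' a) i := by
  refine G.ordUtil_congr rfl fun t ht r => G.prefixDemand_congr_ord fun j t' ht' => ?_
  rw [partialProf_self] at ht
  rcases lt_trichotomy j i with hj | rfl | hj
  · rw [partialProf_of_lt hj] at ht'
    exact iff_of_true (hfirst r j hj t' ht' t ht)
      (appendOrd_lt_of_notMem_of_mem (hdisj j hj t' ht') ht)
  · rw [partialProf_self] at ht'
    exact (appendOrd_lt_appendOrd_iff_of_mem ht' ht).symm
  · simp only [partialProf_of_gt hj, notMem_empty] at ht'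

lemma ordUtil_partialProf_self
    (hlater : ∀ r, ∀ j, i < j → ∀ t ∈ s i, ∀ t' ∈ s j, ord r t < ord r t') :
    G.ordUtil (partialProf s i (s i)) ord i = G.ordUtil s ord i := by
  refine G.ordUtil_congr partialProf_self fun t ht r =>
    G.prefixDemand_congr_profile fun j t' ht't => ?_
  rw [partialProf_self] at ht
  rcases le_or_gt j i with hj | hj
  · rw [partialProf_self_of_le hj]
  · rw [partialProf_of_gt hj]
    exact iff_of_false (notMem_empty t')
      fun ht' => (hlater r j hj t ht t' ht').not_gt ht't

theorem ordUtil_deviation_le_of_isLeast {s' : Fin n → Finset τ} {C : Finset (Fin n)}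
    (hs : G.Valid s) (hord : InjOrd ord)
    (horder : ∀ (r : ρ) (i j : Fin n), i < j → ∀ t ∈ s i, ∀ t' ∈ s j, ord r t < ord r t')
    (hbest : ∀ i : Fin n, ∀ a ∈ G.strat i, ∀ orda : ρ → τ → ℕ, IsReorder ord orda a →
      G.ordUtil (partialProf s i a) orda i ≤ G.ordUtil (partialProf s i (s i)) ord i)
    (hs' : G.Valid s') (hfix : ∀ j ∉ C, s' j = s j) (hre : IsReorder ord ord' (newTasks C s s'))
    (hi : IsLeast C i) :
    G.ordUtil s' ord' i ≤ G.ordUtil s ord i := by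
  have hbefore : ∀ j < i, s' j = s j := fun j hj => hfix j fun hjC => (hi.2 hjC).not_gt hj
  have hdisj : ∀ j < i, ∀ t ∈ s j, t ∉ s' i := fun j hj t ht ht' =>
    hj.ne (hs.eq_of_mem_of_mem hs' ht ht')
  have hfirst : ∀ r, ∀ j < i, ∀ t' ∈ s j, ∀ t ∈ s' i, ord' r t' < ord' r t := by
    intro r j hj t' ht' t ht
    have hold : t' ∉ newTasks C s s' := notMem_newTasks_of_mem hs hs' ht'
    by_cases hts : t ∈ s i
    · exact (hre.2.1 r t' hold t (notMem_newTasks_of_mem hs hs' hts)).2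
        (horder r j i hj t' ht' t hts)
    · exact hre.2.2 r t' hold t (mem_biUnion.2 ⟨i, hi.1, mem_sdiff.2 ⟨ht, hts⟩⟩)
  calc G.ordUtil s' ord' i
      ≤ G.ordUtil (partialProf s i (s' i)) ord' i :=
        G.ordUtil_le_of_subset (partialProf_subset hbefore) partialProf_self ord'
    _ = G.ordUtil (partialProf s i (s' i)) (appendOrd ord ord' (s' i)) i :=
        G.ordUtil_partialProf_appendOrd hdisj hfirst
    _ ≤ G.ordUtil (partialProf s i (s i)) ord i :=
        hbest i (s' i) (hs' i) _ (isReorder_appendOrd hord hre.1)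
    _ = G.ordUtil s ord i := G.ordUtil_partialProf_self fun r j hj => horder r i j hj

end Insertion

end BudgetGame

open BudgetGame in
/-- insert the players `0,…,n−1` one after another, each inserted player
`i` choosing a strategy maximizing her utility against the strategies of the players
inserted before her, her chosen tasks being appended at the end of every resource's
order (so in the resulting order the chosen tasks of earlier players precede those of
later players).  The resulting state `(s,≺)` is a strong equilibrium; in particular,
every ordered budget game has a strong equilibrium. -/
theorem stmt_10 {n : ℕ} {ρ τ : Type*} [Fintype ρ] [Fintype τ] [DecidableEq τ]
    (G : BudgetGame (Fin n) ρ τ) (s : Fin n → Finset τ) (ord : ρ → τ → ℕ)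
    (hs : G.Valid s) (hord : InjOrd ord)
    (horder : ∀ (r : ρ) (i j : Fin n), i < j →
      ∀ t ∈ s i, ∀ t' ∈ s j, ord r t < ord r t')
    (hbest : ∀ i : Fin n, ∀ a ∈ G.strat i, ∀ orda : ρ → τ → ℕ,
      IsReorder ord orda a →
      G.ordUtil (partialProf s i a) orda i ≤ G.ordUtil (partialProf s i (s i)) ord i) :
    G.IsStrongEq s ord ∧
    ∃ (s₂ : Fin n → Finset τ) (ord₂ : ρ → τ → ℕ), G.IsStrongEq s₂ ord₂ := by
  have hstrong : G.IsStrongEq s ord := by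
    refine ⟨hs, hord, ?_⟩
    rintro ⟨C, s', ord', hC, hs', hfix, hre, himp⟩
    have hleast : IsLeast (C : Set (Fin n)) (C.min' hC) := C.isLeast_min' hC
    exact (G.ordUtil_deviation_le_of_isLeast hs hord horder hbest hs' hfix hre hleast).not_gt
      (himp _ hleast.1)
  exact ⟨hstrong, s, ord, hstrong⟩

end
end

section
/- For every ε with 0 < ε < 1 there exists an ordered budget game having a pure Nash equilibrium (s,≺) and a strategy profile s* with u(s*) = (2 − ε)·u(s,≺); i.e., the price of anarchy bound 2 for ordered budget games is asymptotically tight. -/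
noncomputable section

open Finset

/-!
A player who comes first on a resource can take its whole budget. In the game below, player 1
grabs the shared resource (budget 1) ahead of player 0, whose only strategy uses that resource,
so the equilibrium welfare is 1. Player 1's alternative, a private resource of budget `c ≤ 1`,
does not pay for her, although sending her there lets both players be served: welfare `1 + c`.
-/

namespace BudgetGame

variable {ι ρ τ : Type*} [Fintype ι] [Fintype ρ] [Fintype τ] [DecidableEq ι] [DecidableEq τ]
  (G : BudgetGame ι ρ τ)

theorem ordTaskUtil_le_demand (s : ι → Finset τ) (ord : ρ → τ → ℕ) (t : τ) (r : ρ) :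
    G.ordTaskUtil s ord t r ≤ G.demand t r :=
  min_le_left _ _

theorem ordUtil_le_sum_demand (s : ι → Finset τ) (ord : ρ → τ → ℕ) (i : ι) :
    G.ordUtil s ord i ≤ ∑ t ∈ s i, ∑ r, G.demand t r :=
  sum_le_sum fun t _ => sum_le_sum fun r _ => G.ordTaskUtil_le_demand s ord t r

theorem prefixDemand_eq_of_isReorder_empty {ord ord' : ρ → τ → ℕ} (h : IsReorder ord ord' ∅)
    (s : ι → Finset τ) : G.prefixDemand s ord' = G.prefixDemand s ord := by
  funext t r
  unfold prefixDemand
  refine sum_congr rfl fun i _ => sum_congr (filter_congr fun x _ => ?_) fun _ _ => rfl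
  exact h.2.1 r x (notMem_empty x) t (notMem_empty t)

theorem ordUtil_update_self {s : ι → Finset τ} {ord ord' : ρ → τ → ℕ} {i : ι}
    (h : IsReorder ord ord' (s i \ s i)) :
    G.ordUtil (Function.update s i (s i)) ord' i = G.ordUtil s ord i := by
  rw [sdiff_self, bot_eq_empty] at h
  simp only [Function.update_eq_self, ordUtil, ordTaskUtil,
    G.prefixDemand_eq_of_isReorder_empty h]

end BudgetGame

open BudgetGame

-- Resource 0 is shared (tasks 0 and 1 both demand its whole budget), resource 1 is private to task 2.
def blockingGame (c : ℝ) (hc : 0 < c) : BudgetGame (Fin 2) (Fin 2) (Fin 3) where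
  budget := ![1, c]
  budget_pos := by intro r; fin_cases r <;> simp [hc]
  demand := ![![1, 0], ![1, 0], ![0, c]]
  demand_nonneg := by intro t r; fin_cases t <;> fin_cases r <;> simp [hc.le]
  owner := ![0, 1, 1]
  strat := ![{{0}}, {{1}, {2}}]
  strat_nonempty := by intro i; fin_cases i <;> simp
  strat_owned := by decide

def blockingProfile : Fin 2 → Finset (Fin 3) := ![{0}, {1}]

def optimalProfile : Fin 2 → Finset (Fin 3) := ![{0}, {2}]

def blockingOrd : Fin 2 → Fin 3 → ℕ := fun _ => ![1, 0, 2]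

theorem injOrd_blockingOrd : InjOrd blockingOrd :=
  fun _ => (by decide : Function.Injective (![1, 0, 2] : Fin 3 → ℕ))

theorem ordUtil_blockingProfile (c : ℝ) (hc : 0 < c) :
    (blockingGame c hc).ordUtil blockingProfile blockingOrd = ![0, 1] := by
  funext i
  fin_cases i <;> simp [ordUtil, ordTaskUtil, prefixDemand, blockingGame, blockingProfile,
    blockingOrd, Fin.sum_univ_two, filter_singleton]

theorem ordWelfare_blockingProfile (c : ℝ) (hc : 0 < c) :
    (blockingGame c hc).ordWelfare blockingProfile blockingOrd = 1 := by
  simp [ordWelfare, ordUtil_blockingProfile]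

theorem ordWelfare_optimalProfile (c : ℝ) (hc : 0 < c) :
    (blockingGame c hc).ordWelfare optimalProfile blockingOrd = 1 + c := by
  simp [ordWelfare, ordUtil, ordTaskUtil, prefixDemand, blockingGame, optimalProfile,
    blockingOrd, Fin.sum_univ_two, filter_singleton, hc.le]

theorem ordNE_blockingProfile (c : ℝ) (hc : 0 < c) (hc1 : c ≤ 1) :
    (blockingGame c hc).ordNE blockingProfile blockingOrd := by
  refine ⟨fun i => by fin_cases i <;> simp [blockingGame, blockingProfile], injOrd_blockingOrd,
    fun i a ha ord' hord' => ?_⟩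
  by_cases hai : a = blockingProfile i
  · subst hai
    exact ((blockingGame c hc).ordUtil_update_self hord').le
  · obtain ⟨rfl, rfl⟩ : i = 1 ∧ a = {2} := by
      fin_cases i <;> simp_all [blockingGame, blockingProfile]
    calc _ ≤ ∑ t ∈ {2}, ∑ r, (blockingGame c hc).demand t r := ordUtil_le_sum_demand _ _ _ _
      _ = c := by simp [blockingGame]
      _ ≤ _ := by simpa [ordUtil_blockingProfile] using hc1

/-- for every `0 < ε < 1` there is an ordered budget game with a pure
Nash equilibrium `(s,≺)` and a strategy profile `s*` whose (order-independent) social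
welfare equals `(2 − ε)` times that of `(s,≺)`. -/
theorem stmt_14 (ε : ℝ) (h0 : 0 < ε) (h1 : ε < 1) :
    ∃ (n m k : ℕ) (G : BudgetGame (Fin n) (Fin m) (Fin k))
      (s sstar : Fin n → Finset (Fin k)) (ord ordstar : Fin m → Fin k → ℕ),
      G.ordNE s ord ∧ G.Valid sstar ∧ InjOrd ordstar ∧
      G.ordWelfare sstar ordstar = (2 - ε) * G.ordWelfare s ord := by
  have hc : 0 < 1 - ε := by linarith
  refine ⟨2, 2, 3, blockingGame (1 - ε) hc, blockingProfile, optimalProfile, blockingOrd,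
    blockingOrd, ordNE_blockingProfile _ hc (by linarith), ?_, injOrd_blockingOrd, ?_⟩
  · intro i; fin_cases i <;> simp [blockingGame, optimalProfile]
  · rw [ordWelfare_optimalProfile, ordWelfare_blockingProfile]
    ring

end
end

section
/- Consider an ordered budget game with the tie-breaking rule p_max: before each simultaneous strategy change, players are assigned distinct priorities so that a player with strictly larger current utility receives a strictly higher priority (ties broken arbitrarily), and the newly chosen tasks of the deviating players are appended at the end of every resource's order, ordered among themselves in decreasing order of their owners' priorities. If in each step every deviating player would strictly increase her utility as a sole deviator from the current state, then every sequence of such simultaneous improvement steps is finite and terminates in a pure Nash equilibrium. -/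
noncomputable section

open Finset

open BudgetGame in
/-- A simultaneous improvement step with priorities `p`: a nonempty set `N'` of
players changes strategies, each of whom would strictly increase her utility as a
sole deviator from the current state; the newly chosen tasks are appended at the end
of every resource's order, ordered among themselves in decreasing order of their
owners' priorities. -/
def SimImprove {ι ρ τ : Type*} [Fintype ι] [Fintype ρ] [Fintype τ]
    [DecidableEq ι] [DecidableEq τ]
    (G : BudgetGame ι ρ τ) (p : ι → ℕ)
    (s : ι → Finset τ) (ord : ρ → τ → ℕ)
    (s' : ι → Finset τ) (ord' : ρ → τ → ℕ) : Prop :=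
  ∃ N' : Finset ι, N'.Nonempty ∧
    (∀ j ∉ N', s' j = s j) ∧
    (∀ i ∈ N', s' i ∈ G.strat i) ∧
    (∀ i ∈ N', ∃ ord'' : ρ → τ → ℕ, IsReorder ord ord'' (s' i \ s i) ∧
      G.ordUtil s ord i < G.ordUtil (Function.update s i (s' i)) ord'' i) ∧
    IsReorder ord ord' (newTasks N' s s') ∧
    (∀ r : ρ, ∀ t ∈ newTasks N' s s', ∀ t' ∈ newTasks N' s s',
      p (G.owner t') < p (G.owner t) → ord' r t < ord' r t')

open BudgetGame in
/-- A simultaneous improvement step under the tie-breaking rule `p_max`: priorities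
are (re)assigned injectively so that a player with strictly larger current utility
gets a strictly higher priority, and the step is a simultaneous improvement step for
these priorities. -/
def SimImproveMax {ι ρ τ : Type*} [Fintype ι] [Fintype ρ] [Fintype τ]
    [DecidableEq ι] [DecidableEq τ]
    (G : BudgetGame ι ρ τ)
    (s : ι → Finset τ) (ord : ρ → τ → ℕ)
    (s' : ι → Finset τ) (ord' : ρ → τ → ℕ) : Prop :=
  ∃ p : ι → ℕ, Function.Injective p ∧
    (∀ i j : ι, G.ordUtil s ord j < G.ordUtil s ord i → p j < p i) ∧
    SimImprove G p s ord s' ord'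

/-!
Along a step, a player outside the deviating coalition never loses: her tasks keep their
places relative to the old tasks, and all new tasks are appended behind them. The deviator
`i₀` of highest priority does at least as well as she would as a sole deviator: her kept
tasks see fewer predecessors, and her new tasks form a block right behind all old tasks,
which receives `min (demand, leftover budget)` with a leftover at least as large as in the
sole deviation. Under `p_max`, `i₀` has the largest current utility among the deviators, so
every player who loses started at most at `u i₀`, while `i₀` strictly gains. Utilities take
finitely many values, so if `rank x` counts the values `≤ x`, the potential
`∑ i, (n + 1) ^ rank (u i)` strictly increases and no step sequence is infinite. Conversely,
a profitable unilateral deviation is itself a step, with coalition `{i}`.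
-/

section Potential

variable {ι α : Type*} [Fintype ι] [LinearOrder α]

def LeaderImproves (u v : ι → α) : Prop :=
  ∃ i, u i < v i ∧ ∀ j, v j < u j → u j ≤ u i

def rankIn (V : Finset α) (x : α) : ℕ := #{y ∈ V | y ≤ x}

theorem rankIn_mono (V : Finset α) : Monotone (rankIn V) := fun _ _ hxy =>
  card_le_card <| monotone_filter_right V fun _ _ hy => hy.trans hxy

theorem rankIn_lt_rankIn {V : Finset α} {x y : α} (hy : y ∈ V) (hxy : x < y) :
    rankIn V x < rankIn V y := by
  refine card_lt_card <| (ssubset_iff_of_subset ?_).mpr ⟨y, ?_, ?_⟩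
  · exact monotone_filter_right V fun _ _ hz => hz.trans hxy.le
  · simp [hy]
  · simp [hxy]

variable (ι) in
def potential (V : Finset α) (u : ι → α) : ℕ := ∑ i, (Fintype.card ι + 1) ^ rankIn V (u i)

theorem potential_lt_of_leaderImproves {V : Finset α} {u v : ι → α} (h : LeaderImproves u v)
    (hv : ∀ i, v i ∈ V) : potential ι V u < potential ι V v := by
  obtain ⟨i₀, hi₀, hlosers⟩ := h
  set M := Fintype.card ι + 1
  have hM : 0 < M := Nat.succ_pos _
  let S : Finset ι := {j | u j ≤ u i₀}
  have hi₀S : i₀ ∈ S := by simp [S]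
  have hS : ∑ j ∈ S, M ^ rankIn V (u j) < ∑ j ∈ S, M ^ rankIn V (v j) :=
    calc ∑ j ∈ S, M ^ rankIn V (u j)
        ≤ ∑ _j ∈ S, M ^ rankIn V (u i₀) := sum_le_sum fun j hj =>
          Nat.pow_le_pow_right hM (rankIn_mono V (mem_filter.mp hj).2)
      _ = #S * M ^ rankIn V (u i₀) := by rw [sum_const, smul_eq_mul]
      _ < M * M ^ rankIn V (u i₀) :=
          Nat.mul_lt_mul_of_pos_right (Nat.lt_succ_of_le (card_le_univ S)) (by positivity)
      _ = M ^ (rankIn V (u i₀) + 1) := (pow_succ' _ _).symm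
      _ ≤ M ^ rankIn V (v i₀) := Nat.pow_le_pow_right hM (rankIn_lt_rankIn (hv i₀) hi₀)
      _ ≤ ∑ j ∈ S, M ^ rankIn V (v j) :=
          single_le_sum (f := fun j => M ^ rankIn V (v j)) (fun _ _ => Nat.zero_le _) hi₀S
  have hSc : ∑ j ∈ univ.filter (fun j => ¬ u j ≤ u i₀), M ^ rankIn V (u j)
      ≤ ∑ j ∈ univ.filter (fun j => ¬ u j ≤ u i₀), M ^ rankIn V (v j) :=
    sum_le_sum fun j hj => Nat.pow_le_pow_right hM <| rankIn_mono V <|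
      not_lt.mp fun hlt => (mem_filter.mp hj).2 (hlosers j hlt)
  unfold potential
  rw [← sum_filter_add_sum_filter_not univ (fun j => u j ≤ u i₀),
    ← sum_filter_add_sum_filter_not univ (fun j => u j ≤ u i₀) (fun j => M ^ rankIn V (v j))]
  exact Nat.add_lt_add_of_lt_of_le hS hSc

theorem not_exists_leaderImproves_chain (V : Finset α) :
    ¬ ∃ u : ℕ → ι → α, (∀ k i, u k i ∈ V) ∧ ∀ k, LeaderImproves (u k) (u (k + 1)) := by
  rintro ⟨u, hV, hu⟩
  have hmono : StrictMono fun k => potential ι V (u k) :=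
    strictMono_nat_of_lt_succ fun k => potential_lt_of_leaderImproves (hu k) (hV (k + 1))
  refine not_injective_infinite_finite (fun k i => (⟨u k i, hV k i⟩ : V)) fun k l hkl => ?_
  refine hmono.injective (congrArg (potential ι V) (funext fun i => ?_))
  exact congrArg Subtype.val (congrFun hkl i)

end Potential

theorem min_max_zero_add_min_max_zero_sub {a b : ℝ} (ha : 0 ≤ a) (hb : 0 ≤ b) (R : ℝ) :
    min a (max 0 R) + min b (max 0 (R - a)) = min (a + b) (max 0 R) := by
  simp only [min_def, max_def]
  split_ifs <;> linarith

theorem sum_min_max_zero_sub_sum_lt {τ β : Type*} [DecidableEq τ] [LinearOrder β] (d : τ → ℝ)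
    {g : τ → β} (hg : Function.Injective g) (B : Finset τ) (hd : ∀ t ∈ B, 0 ≤ d t) (R : ℝ) :
    ∑ t ∈ B, min (d t) (max 0 (R - ∑ t' ∈ B with g t' < g t, d t')) =
      min (∑ t ∈ B, d t) (max 0 R) := by
  induction B using Finset.induction_on_max_value g with
  | empty => simp
  | insert a B haB hmax ih =>
    have hd' : ∀ t ∈ B, 0 ≤ d t := fun t ht => hd t (mem_insert_of_mem ht)
    have hbefore : ∀ t ∈ B, {t' ∈ insert a B | g t' < g t} = {t' ∈ B | g t' < g t} :=
      fun t ht => by rw [filter_insert, if_neg (hmax t ht).not_gt]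
    have hlast : {t' ∈ insert a B | g t' < g a} = B := by
      rw [filter_insert, if_neg (lt_irrefl _), filter_true_of_mem]
      exact fun t ht => (hmax t ht).lt_of_ne (hg.ne (ne_of_mem_of_not_mem ht haB))
    have hrest : ∑ t ∈ B, min (d t) (max 0 (R - ∑ t' ∈ insert a B with g t' < g t, d t')) =
        min (∑ t ∈ B, d t) (max 0 R) := by
      rw [← ih hd']
      exact sum_congr rfl fun t ht => by rw [hbefore t ht]
    rw [sum_insert haB, sum_insert haB, hlast, hrest, add_comm,
      min_max_zero_add_min_max_zero_sub (sum_nonneg hd') (hd a (mem_insert_self a B)), add_comm]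

theorem exists_injective_nat_lt_of_lt {ι α : Type*} [Fintype ι] [LinearOrder α] (u : ι → α) :
    ∃ p : ι → ℕ, Function.Injective p ∧ ∀ i j, u j < u i → p j < p i := by
  let key : ι → α ×ₗ ℕ := fun i => toLex (u i, Fintype.equivFin ι i)
  have hkey : Function.Injective key := fun i j h => by
    simpa [key, Fin.val_inj] using congrArg (fun x => (ofLex x).2) h
  let _ : LinearOrder ι := LinearOrder.lift' key hkey
  let e := (Fintype.orderIsoFinOfCardEq ι rfl).symm
  refine ⟨fun i => e i, Fin.val_injective.comp e.injective, fun i j h => e.strictMono ?_⟩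
  show key j < key i
  exact Prod.Lex.lt_iff.mpr (Or.inl h)

namespace BudgetGame

section Tasks

variable {ι ρ τ : Type*} [DecidableEq τ] {s s' : ι → Finset τ} {o o' : ρ → τ → ℕ}
  {N : Finset ι} {X B : Finset τ} {i : ι} {t : τ} {r : ρ}

theorem mem_of_notMem_newTasks (hfix : ∀ j ∉ N, s' j = s j) (ht : t ∈ s' i)
    (hnew : t ∉ newTasks N s s') : t ∈ s i := by
  by_cases hi : i ∈ N
  · by_contra h
    exact hnew (mem_biUnion.mpr ⟨i, hi, mem_sdiff.mpr ⟨ht, h⟩⟩)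
  · rwa [← hfix i hi]

variable [Fintype ι]

def chosenTasks (s : ι → Finset τ) : Finset τ := univ.biUnion s

def predecessors (s : ι → Finset τ) (o : ρ → τ → ℕ) (r : ρ) (t : τ) : Finset τ :=
  {t' ∈ chosenTasks s | o r t' < o r t}

theorem mem_chosenTasks : t ∈ chosenTasks s ↔ ∃ i, t ∈ s i := by
  simp [chosenTasks]

theorem chosenTasks_sdiff_newTasks_subset (hfix : ∀ j ∉ N, s' j = s j) :
    chosenTasks s' \ newTasks N s s' ⊆ chosenTasks s := fun t ht => by
  obtain ⟨htc, htnew⟩ := mem_sdiff.mp ht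
  obtain ⟨j, htj⟩ := mem_chosenTasks.mp htc
  exact mem_chosenTasks.mpr ⟨j, mem_of_notMem_newTasks hfix htj htnew⟩

theorem chosenTasks_sdiff_newTasks_subset_update [DecidableEq ι] (hfix : ∀ j ∉ N, s' j = s j)
    (hi : i ∈ N) :
    chosenTasks s' \ newTasks N s s' ⊆ chosenTasks (Function.update s i (s' i)) \ (s' i \ s i) :=
  fun t ht => by
  obtain ⟨htc, htnew⟩ := mem_sdiff.mp ht
  obtain ⟨j, htj⟩ := mem_chosenTasks.mp htc
  refine mem_sdiff.mpr ⟨mem_chosenTasks.mpr ⟨j, ?_⟩, fun h => htnew (mem_biUnion.mpr ⟨i, hi, h⟩)⟩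
  rcases eq_or_ne j i with rfl | hj
  · simpa using htj
  · simpa [hj] using mem_of_notMem_newTasks hfix htj htnew

theorem IsReorder.predecessors_of_notMem (hre : IsReorder o o' X) (ht : t ∉ X)
    (s : ι → Finset τ) (r : ρ) :
    predecessors s o' r t = {t' ∈ chosenTasks s \ X | o r t' < o r t} := by
  ext t'
  simp only [predecessors, mem_filter, mem_sdiff]
  constructor
  · rintro ⟨ht's, hlt⟩
    have ht'X : t' ∉ X := fun h => (hre.2.2 r t ht t' h).not_gt hlt
    exact ⟨⟨ht's, ht'X⟩, (hre.2.1 r t' ht'X t ht).mp hlt⟩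
  · rintro ⟨⟨ht's, ht'X⟩, hlt⟩
    exact ⟨ht's, (hre.2.1 r t' ht'X t ht).mpr hlt⟩

theorem IsReorder.predecessors_of_mem (hre : IsReorder o o' X) (hBX : B ⊆ X)
    (hBs : B ⊆ chosenTasks s) (ht : t ∈ B) (hafter : ∀ t' ∈ X \ B, o' r t < o' r t') :
    predecessors s o' r t = (chosenTasks s \ X) ∪ {t' ∈ B | o' r t' < o' r t} := by
  ext t'
  simp only [predecessors, mem_filter, mem_sdiff, mem_union]
  constructor
  · rintro ⟨ht's, hlt⟩
    by_cases ht'X : t' ∈ X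
    · by_cases ht'B : t' ∈ B
      · exact Or.inr ⟨ht'B, hlt⟩
      · exact absurd hlt (hafter t' (mem_sdiff.mpr ⟨ht'X, ht'B⟩)).not_gt
    · exact Or.inl ⟨ht's, ht'X⟩
  · rintro (⟨ht's, ht'X⟩ | ⟨ht'B, hlt⟩)
    · exact ⟨ht's, hre.2.2 r t' ht'X t (hBX ht)⟩
    · exact ⟨hBs ht'B, hlt⟩

end Tasks

variable {ι ρ τ : Type*} [Fintype ι] [Fintype ρ] [Fintype τ] [DecidableEq ι] [DecidableEq τ]
  {G : BudgetGame ι ρ τ} {s s' : ι → Finset τ} {o o' : ρ → τ → ℕ} {N : Finset ι}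
  {X B : Finset τ} {i : ι} {t : τ} {r : ρ}

theorem owner_eq_of_mem (hs : G.Valid s) (ht : t ∈ s i) : G.owner t = i :=
  G.strat_owned i _ (hs i) t ht

theorem valid_update {a : Finset τ} (hs : G.Valid s) (ha : a ∈ G.strat i) :
    G.Valid (Function.update s i a) := fun j => by
  rcases eq_or_ne j i with rfl | hj
  · simpa using ha
  · simpa [hj] using hs j

theorem owner_mem_of_mem_newTasks (hs' : G.Valid s') (ht : t ∈ newTasks N s s') :
    G.owner t ∈ N ∧ t ∈ s' (G.owner t) \ s (G.owner t) := by
  obtain ⟨j, hj, htj⟩ := mem_biUnion.mp ht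
  rw [owner_eq_of_mem hs' (mem_sdiff.mp htj).1]
  exact ⟨hj, htj⟩

theorem pairwiseDisjoint_of_valid (hs : G.Valid s) :
    ((univ : Finset ι) : Set ι).PairwiseDisjoint s :=
  fun _ _ _ _ hij => disjoint_left.mpr fun _ hti htj =>
    hij ((owner_eq_of_mem hs hti).symm.trans (owner_eq_of_mem hs htj))

theorem prefixDemand_eq_sum_predecessors (hs : G.Valid s) (o : ρ → τ → ℕ) (t : τ) (r : ρ) :
    G.prefixDemand s o t r = ∑ t' ∈ predecessors s o r t, G.demand t' r := by
  rw [predecessors, chosenTasks, filter_biUnion,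
    sum_biUnion ((pairwiseDisjoint_of_valid hs).mono fun _ => filter_subset _ _)]
  rfl

theorem ordTaskUtil_eq (hs : G.Valid s) (o : ρ → τ → ℕ) (t : τ) (r : ρ) :
    G.ordTaskUtil s o t r = min (G.demand t r)
      (max 0 (G.budget r - ∑ t' ∈ predecessors s o r t, G.demand t' r)) := by
  rw [ordTaskUtil, prefixDemand_eq_sum_predecessors hs]

theorem ordTaskUtil_le_ordTaskUtil {s₁ s₂ : ι → Finset τ} {o₁ o₂ : ρ → τ → ℕ}
    (hs₁ : G.Valid s₁) (hs₂ : G.Valid s₂)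
    (h : predecessors s₂ o₂ r t ⊆ predecessors s₁ o₁ r t) :
    G.ordTaskUtil s₁ o₁ t r ≤ G.ordTaskUtil s₂ o₂ t r := by
  rw [ordTaskUtil_eq hs₁, ordTaskUtil_eq hs₂]
  gcongr
  exact fun _ _ _ => G.demand_nonneg _ r

theorem IsReorder.sum_ordTaskUtil_of_block (hs : G.Valid s) (hre : IsReorder o o' X)
    (hBX : B ⊆ X) (hBs : B ⊆ chosenTasks s) (hafter : ∀ t ∈ B, ∀ t' ∈ X \ B, o' r t < o' r t') :
    ∑ t ∈ B, G.ordTaskUtil s o' t r = min (∑ t ∈ B, G.demand t r)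
      (max 0 (G.budget r - ∑ t' ∈ chosenTasks s \ X, G.demand t' r)) := by
  calc ∑ t ∈ B, G.ordTaskUtil s o' t r
      = ∑ t ∈ B, min (G.demand t r) (max 0 ((G.budget r - ∑ t' ∈ chosenTasks s \ X,
          G.demand t' r) - ∑ t' ∈ B with o' r t' < o' r t, G.demand t' r)) :=
        sum_congr rfl fun t ht => by
          have hdisj : Disjoint (chosenTasks s \ X) {t' ∈ B | o' r t' < o' r t} :=
            sdiff_disjoint.mono_right ((filter_subset _ _).trans hBX)
          rw [ordTaskUtil_eq hs, hre.predecessors_of_mem hBX hBs ht (hafter t ht),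
            sum_union hdisj, sub_sub]
    _ = _ := sum_min_max_zero_sub_sum_lt _ (hre.1 r) B (fun t _ => G.demand_nonneg t r) _

theorem ordUtil_le_of_notMem (hs : G.Valid s) (hs' : G.Valid s')
    (hfix : ∀ j ∉ N, s' j = s j) (hre : IsReorder o o' (newTasks N s s')) (hi : i ∉ N) :
    G.ordUtil s o i ≤ G.ordUtil s' o' i := by
  rw [ordUtil, ordUtil, hfix i hi]
  refine sum_le_sum fun t ht => sum_le_sum fun r _ => ordTaskUtil_le_ordTaskUtil hs hs' ?_
  have htnew : t ∉ newTasks N s s' := fun h =>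
    hi (owner_eq_of_mem hs ht ▸ (owner_mem_of_mem_newTasks hs' h).1)
  rw [hre.predecessors_of_notMem htnew, predecessors]
  exact monotone_filter_left _ (chosenTasks_sdiff_newTasks_subset hfix)

theorem lt_of_mem_of_maxPriority {p : ι → ℕ} {i₀ : ι} (hs' : G.Valid s') (hp : Function.Injective p)
    (hprio : ∀ r : ρ, ∀ t ∈ newTasks N s s', ∀ t' ∈ newTasks N s s',
      p (G.owner t') < p (G.owner t) → o' r t < o' r t')
    (hi₀ : i₀ ∈ N) (hmax : ∀ j ∈ N, p j ≤ p i₀) (r : ρ) (ht : t ∈ s' i₀ \ s i₀) :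
    ∀ t' ∈ newTasks N s s' \ (s' i₀ \ s i₀), o' r t < o' r t' := by
  intro t' ht'
  obtain ⟨ht'new, ht'i₀⟩ := mem_sdiff.mp ht'
  obtain ⟨hown, hmem⟩ := owner_mem_of_mem_newTasks hs' ht'new
  have hne : G.owner t' ≠ i₀ := fun h => ht'i₀ (h ▸ hmem)
  refine hprio r t (mem_biUnion.mpr ⟨i₀, hi₀, ht⟩) t' ht'new ?_
  rw [owner_eq_of_mem hs' (mem_sdiff.mp ht).1]
  exact (hmax _ hown).lt_of_ne (hp.ne hne)

theorem ordUtil_update_le_of_maxPriority {p : ι → ℕ} {i₀ : ι} {o'' : ρ → τ → ℕ}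
    (hs : G.Valid s) (hs' : G.Valid s') (hfix : ∀ j ∉ N, s' j = s j)
    (hre : IsReorder o o' (newTasks N s s')) (hp : Function.Injective p)
    (hprio : ∀ r : ρ, ∀ t ∈ newTasks N s s', ∀ t' ∈ newTasks N s s',
      p (G.owner t') < p (G.owner t) → o' r t < o' r t')
    (hi₀ : i₀ ∈ N) (hmax : ∀ j ∈ N, p j ≤ p i₀) (hre'' : IsReorder o o'' (s' i₀ \ s i₀)) :
    G.ordUtil (Function.update s i₀ (s' i₀)) o'' i₀ ≤ G.ordUtil s' o' i₀ := by
  set Nw := s' i₀ \ s i₀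
  set sh := Function.update s i₀ (s' i₀)
  have hsh : G.Valid sh := valid_update hs (hs' i₀)
  have hNw_new : Nw ⊆ newTasks N s s' := fun t ht => mem_biUnion.mpr ⟨i₀, hi₀, ht⟩
  have hchosen := chosenTasks_sdiff_newTasks_subset_update hfix hi₀
  have hold : ∀ t ∈ s' i₀ \ Nw, ∀ r, G.ordTaskUtil sh o'' t r ≤ G.ordTaskUtil s' o' t r := by
    intro t ht r
    obtain ⟨hts', htNw⟩ := mem_sdiff.mp ht
    have htnew : t ∉ newTasks N s s' := fun h => htNw <| by
      simpa only [owner_eq_of_mem hs' hts'] using (owner_mem_of_mem_newTasks hs' h).2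
    refine ordTaskUtil_le_ordTaskUtil hsh hs' ?_
    rw [hre.predecessors_of_notMem htnew, hre''.predecessors_of_notMem htNw]
    exact monotone_filter_left _ hchosen
  have hnew : ∀ r, ∑ t ∈ Nw, G.ordTaskUtil sh o'' t r ≤ ∑ t ∈ Nw, G.ordTaskUtil s' o' t r := by
    intro r
    have hNw_sh : Nw ⊆ chosenTasks sh := fun t ht =>
      mem_chosenTasks.mpr ⟨i₀, by simpa [sh] using (mem_sdiff.mp ht).1⟩
    have hNw_s' : Nw ⊆ chosenTasks s' := fun t ht =>
      mem_chosenTasks.mpr ⟨i₀, (mem_sdiff.mp ht).1⟩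
    rw [hre''.sum_ordTaskUtil_of_block hsh subset_rfl hNw_sh (by simp),
      hre.sum_ordTaskUtil_of_block hs' hNw_new hNw_s'
        fun t ht => lt_of_mem_of_maxPriority hs' hp hprio hi₀ hmax r ht]
    gcongr
    exact fun _ _ _ => G.demand_nonneg _ r
  have hsplit : ∀ (s₁ : ι → Finset τ) (o₁ : ρ → τ → ℕ), s₁ i₀ = s' i₀ → G.ordUtil s₁ o₁ i₀ =
      ∑ t ∈ s' i₀ \ Nw, ∑ r, G.ordTaskUtil s₁ o₁ t r + ∑ r, ∑ t ∈ Nw, G.ordTaskUtil s₁ o₁ t r := by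
    intro s₁ o₁ h
    rw [ordUtil, h, ← sum_sdiff (sdiff_subset : Nw ⊆ s' i₀), sum_comm (s := Nw)]
  rw [hsplit sh o'' (Function.update_self ..), hsplit s' o' rfl]
  exact add_le_add (sum_le_sum fun t ht => sum_le_sum fun r _ => hold t ht r)
    (sum_le_sum fun r _ => hnew r)

theorem exists_finset_ordUtil_mem (G : BudgetGame ι ρ τ) :
    ∃ V : Finset ℝ, ∀ s o i, G.Valid s → G.ordUtil s o i ∈ V := by
  -- on valid profiles, utilities see the orders only through the predecessor sets
  let F : (ι → Finset τ) × (ρ → τ → Finset τ) × ι → ℝ := fun x =>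
    ∑ t ∈ x.1 x.2.2, ∑ r, min (G.demand t r)
      (max 0 (G.budget r - ∑ t' ∈ x.2.1 r t, G.demand t' r))
  refine ⟨(Set.finite_range F).toFinset, fun s o i hs =>
    (Set.finite_range F).mem_toFinset.mpr ⟨(s, predecessors s o, i), ?_⟩⟩
  simp only [F, ordUtil, ordTaskUtil_eq hs]

end BudgetGame

section Dynamics

open BudgetGame

variable {ι ρ τ : Type*} [Fintype ι] [Fintype ρ] [Fintype τ] [DecidableEq ι] [DecidableEq τ]
  {G : BudgetGame ι ρ τ} {s s' : ι → Finset τ} {o o' : ρ → τ → ℕ}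

theorem SimImprove.valid {p : ι → ℕ} (hs : G.Valid s) (h : SimImprove G p s o s' o') :
    G.Valid s' := by
  obtain ⟨N, -, hfix, hstrat, -⟩ := h
  intro j
  by_cases hj : j ∈ N
  · exact hstrat j hj
  · rw [hfix j hj]
    exact hs j

theorem SimImproveMax.valid (hs : G.Valid s) (h : SimImproveMax G s o s' o') : G.Valid s' := by
  obtain ⟨p, -, -, hstep⟩ := h
  exact hstep.valid hs

theorem SimImproveMax.leaderImproves (hs : G.Valid s) (h : SimImproveMax G s o s' o') :
    LeaderImproves (G.ordUtil s o) (G.ordUtil s' o') := by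
  obtain ⟨p, hp, hpmax, hstep⟩ := h
  have hs' := hstep.valid hs
  obtain ⟨N, hN, hfix, -, himp, hre, hprio⟩ := hstep
  obtain ⟨i₀, hi₀, hmax⟩ := N.exists_max_image p hN
  obtain ⟨o'', hre'', hlt⟩ := himp i₀ hi₀
  refine ⟨i₀, hlt.trans_le
    (ordUtil_update_le_of_maxPriority hs hs' hfix hre hp hprio hi₀ hmax hre''), fun j hj => ?_⟩
  have hjN : j ∈ N := by
    by_contra hjN
    exact (ordUtil_le_of_notMem hs hs' hfix hre hjN).not_gt hj
  exact not_lt.mp fun h => (hmax j hjN).not_gt (hpmax j i₀ h)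

theorem simImproveMax_update {i : ι} {a : Finset τ} (ha : a ∈ G.strat i)
    (hre : IsReorder o o' (a \ s i))
    (hlt : G.ordUtil s o i < G.ordUtil (Function.update s i a) o' i) :
    SimImproveMax G s o (Function.update s i a) o' := by
  obtain ⟨p, hp, hpmax⟩ := exists_injective_nat_lt_of_lt (G.ordUtil s o)
  have hnew : newTasks {i} s (Function.update s i a) = a \ s i := by simp [newTasks]
  have hown : ∀ t ∈ a \ s i, G.owner t = i := fun t ht => G.strat_owned i a ha t (mem_sdiff.mp ht).1
  refine ⟨p, hp, hpmax, {i}, singleton_nonempty i,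
    fun j hj => Function.update_of_ne (by simpa using hj) _ _, by simpa using ha,
    by simpa using ⟨o', hre, hlt⟩, by rwa [hnew], ?_⟩
  rw [hnew]
  intro r t ht t' ht' hlt
  rw [hown t ht, hown t' ht'] at hlt
  exact absurd hlt (lt_irrefl _)

end Dynamics

open BudgetGame in
/-- under the tie-breaking rule `p_max`, there is no infinite sequence
of simultaneous improvement steps, and a state admitting no such step is a pure Nash
equilibrium (so every sequence of such steps is finite and terminates in one). -/
theorem stmt_16 {ι ρ τ : Type*} [Fintype ι] [Fintype ρ] [Fintype τ]
    [DecidableEq ι] [DecidableEq τ]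
    (G : BudgetGame ι ρ τ) :
    (¬ ∃ f : ℕ → (ι → Finset τ) × (ρ → τ → ℕ),
      G.Valid (f 0).1 ∧ InjOrd (f 0).2 ∧
      ∀ k : ℕ, SimImproveMax G (f k).1 (f k).2 (f (k + 1)).1 (f (k + 1)).2) ∧
    (∀ (s : ι → Finset τ) (ord : ρ → τ → ℕ), G.Valid s → InjOrd ord →
      (¬ ∃ (s' : ι → Finset τ) (ord' : ρ → τ → ℕ), SimImproveMax G s ord s' ord') →
      G.ordNE s ord) := by
  constructor
  · rintro ⟨f, hf₀, -, hstep⟩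
    have hvalid : ∀ k, G.Valid (f k).1 := fun k =>
      Nat.rec hf₀ (fun k ih => (hstep k).valid ih) k
    obtain ⟨V, hV⟩ := G.exists_finset_ordUtil_mem
    exact not_exists_leaderImproves_chain V ⟨fun k => G.ordUtil (f k).1 (f k).2,
      fun k i => hV _ _ i (hvalid k), fun k => (hstep k).leaderImproves (hvalid k)⟩
  · intro s ord hs hord hstuck
    refine ⟨hs, hord, fun i a ha ord' hre => not_lt.mp fun hlt => ?_⟩
    exact hstuck ⟨_, _, simImproveMax_update ha hre hlt⟩
end
end
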